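/- arXiv:2506.18891 — 3 statements merged into one kernel-verified Lean document; each statement's English description precedes it below -/
import Mathlib

section
/- Let R = k[x_0,...,x_n] over an algebraically closed field k, and let J ⊆ R be an ideal generated by homogeneous polynomials f_1,...,f_r of degree d. Then the essential codimension of J is at most n if and only if there exists a point p in projective n-space such that J ⊆ m_p^d, where m_p is the homogeneous prime ideal of p. -/
open MvPolynomial

noncomputable section

variable {k : Type*} [Field k]

/-- The essential codimension of a homogeneous ideal `J ⊆ k[x_0,…,x_n]`: the minimal `r`
for which there exist linear forms `ℓ_1,…,ℓ_r` such that `J` is generated by elements of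
the subring `k[ℓ_1,…,ℓ_r]`. -/
def essCodim {n : ℕ} (J : Ideal (MvPolynomial (Fin (n + 1)) k)) : ℕ :=
  sInf {r : ℕ | ∃ ℓ : Fin r → MvPolynomial (Fin (n + 1)) k,
    (∀ i, (ℓ i).IsHomogeneous 1) ∧
    ∃ S : Set (MvPolynomial (Fin (n + 1)) k),
      S ⊆ (Algebra.adjoin k (Set.range ℓ) : Subalgebra k (MvPolynomial (Fin (n + 1)) k)) ∧
      J = Ideal.span S}

/-- The homogeneous prime ideal `m_p` of a point `p ∈ ℙ^n` given by homogeneous coordinates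
`a ≠ 0`: the ideal generated by the linear forms vanishing at `a`. -/
def pointIdeal {n : ℕ} (a : Fin (n + 1) → k) : Ideal (MvPolynomial (Fin (n + 1)) k) :=
  Ideal.span {ℓ : MvPolynomial (Fin (n + 1)) k | ℓ.IsHomogeneous 1 ∧ eval a ℓ = 0}

/-! ### Auxiliary lemmas -/

lemma aux_degree_one_single {σ : Type*} [DecidableEq σ] (m : σ →₀ ℕ) (h : m.degree = 1) :
    ∃ j, m = Finsupp.single j 1 := by
  have hne : m.support.Nonempty := by
    rcases m.support.eq_empty_or_nonempty with he | hne
    · exfalso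
      have : m = 0 := Finsupp.support_eq_empty.mp he
      simp [this] at h
    · exact hne
  obtain ⟨j, hj⟩ := hne
  have hmj1 : m j = 1 := by
    have h1 : 1 ≤ m j := Nat.one_le_iff_ne_zero.mpr (Finsupp.mem_support_iff.mp hj)
    have h2 : m j ≤ 1 := h ▸ Finsupp.le_degree j m
    omega
  refine ⟨j, ?_⟩
  have hsum : m.degree = m j + ∑ i ∈ m.support.erase j, m i := by
    rw [Finsupp.degree_apply, ← Finset.add_sum_erase _ _ hj]
  have hzero : ∀ i ∈ m.support.erase j, m i = 0 := by
    intro i hi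
    have : ∑ i ∈ m.support.erase j, m i = 0 := by omega
    exact Finset.sum_eq_zero_iff.mp this i hi
  ext i
  rcases eq_or_ne i j with rfl | hij
  · simp [hmj1]
  · rw [Finsupp.single_eq_of_ne' (Ne.symm hij)]
    by_cases hi : i ∈ m.support
    · exact hzero i (Finset.mem_erase.mpr ⟨hij, hi⟩)
    · exact Finsupp.notMem_support_iff.mp hi

lemma aux_degree_add {σ : Type*} (u v : σ →₀ ℕ) : (u + v).degree = u.degree + v.degree := by
  simp only [Finsupp.degree_eq_weight_one]
  exact map_add _ u v

lemma aux_hc_mul {σ R : Type*} [CommSemiring R] (p q : MvPolynomial σ R) (e : ℕ) :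
    homogeneousComponent e (p * q) =
      ∑ ij ∈ Finset.HasAntidiagonal.antidiagonal e,
        homogeneousComponent ij.1 p * homogeneousComponent ij.2 q := by
  classical
  ext m
  rw [coeff_homogeneousComponent, coeff_sum]
  simp_rw [coeff_mul, coeff_homogeneousComponent]
  rw [Finset.sum_comm]
  have key : ∀ uv ∈ Finset.HasAntidiagonal.antidiagonal m,
      (∑ ij ∈ Finset.HasAntidiagonal.antidiagonal e,
        (if (uv : (σ →₀ ℕ) × (σ →₀ ℕ)).1.degree = ij.1 then coeff uv.1 p else 0) *
        (if uv.2.degree = ij.2 then coeff uv.2 q else 0)) =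
      if m.degree = e then coeff uv.1 p * coeff uv.2 q else 0 := by
    intro uv huv
    have hdeg : uv.1.degree + uv.2.degree = m.degree := by
      rw [← aux_degree_add, (Finset.HasAntidiagonal.mem_antidiagonal.mp huv)]
    by_cases hm : m.degree = e
    · rw [if_pos hm]
      rw [Finset.sum_eq_single (uv.1.degree, uv.2.degree)]
      · rw [if_pos rfl, if_pos rfl]
      · intro ij hij hne
        by_cases h1 : uv.1.degree = ij.1
        · have h2 : uv.2.degree ≠ ij.2 := fun h2 => hne (by ext <;> simp [← h1, ← h2])
          rw [if_neg h2, mul_zero]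
        · rw [if_neg h1, zero_mul]
      · intro hmem
        exact absurd (Finset.HasAntidiagonal.mem_antidiagonal.mpr (by omega)) hmem
    · rw [if_neg hm]
      apply Finset.sum_eq_zero
      intro ij hij
      have he : ij.1 + ij.2 = e := Finset.HasAntidiagonal.mem_antidiagonal.mp hij
      by_cases h1 : uv.1.degree = ij.1
      · have h2 : uv.2.degree ≠ ij.2 := by omega
        rw [if_neg h2, mul_zero]
      · rw [if_neg h1, zero_mul]
  rw [Finset.sum_congr rfl key]
  by_cases hm : m.degree = e
  · simp only [if_pos hm]
  · simp only [if_neg hm, Finset.sum_const_zero]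

lemma aux_hom_one_repr {σ : Type*} [Fintype σ] [DecidableEq σ] {R : Type*} [CommRing R]
    (p : MvPolynomial σ R) (h : p.IsHomogeneous 1) :
    p = ∑ j, (coeff (Finsupp.single j 1) p) • (X j : MvPolynomial σ R) := by
  ext m
  rw [coeff_sum]
  simp_rw [coeff_smul, coeff_X']
  by_cases hm : ∃ j, m = Finsupp.single j 1
  · obtain ⟨j0, rfl⟩ := hm
    rw [Finset.sum_eq_single j0]
    · simp
    · intro j _ hne
      rw [if_neg, smul_zero]
      intro hc
      exact hne (by
        have := DFunLike.congr_fun hc j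
        simp [Finsupp.single_apply] at this
        by_contra h'
        exact h' this.symm)
    · intro h'; exact absurd (Finset.mem_univ j0) h'
  · have hz : coeff m p = 0 := by
      by_contra hc
      exact hm (aux_degree_one_single m
        (by rw [Finsupp.degree_eq_weight_one]; exact h hc))
    rw [hz]
    apply (Finset.sum_eq_zero _).symm
    intro j _
    rw [if_neg, smul_zero]
    exact fun hc => hm ⟨j, hc.symm⟩

lemma aux_eval_hom_one {σ : Type*} [Fintype σ] [DecidableEq σ] {R : Type*} [CommRing R]
    (p : MvPolynomial σ R) (h : p.IsHomogeneous 1) (a : σ → R) :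
    eval a p = ∑ j, (coeff (Finsupp.single j 1) p) * a j := by
  conv_lhs => rw [aux_hom_one_repr p h]
  rw [map_sum]
  congr 1; ext j
  rw [smul_eq_C_mul, map_mul, eval_C, eval_X]

lemma aux_adjoin_comp {σ : Type*} {r : ℕ} (ℓ : Fin r → MvPolynomial σ k)
    (hℓ : ∀ i, (ℓ i).IsHomogeneous 1) {p : MvPolynomial σ k}
    (hp : p ∈ Algebra.adjoin k (Set.range ℓ)) (e : ℕ) :
    homogeneousComponent e p ∈ (Ideal.span (Set.range ℓ)) ^ e := by
  induction hp using Algebra.adjoin_induction generalizing e with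
  | mem x hx =>
    rcases hx with ⟨i, rfl⟩
    rcases eq_or_ne e 1 with rfl | hne
    · rw [homogeneousComponent_of_mem (hℓ i), if_pos rfl, pow_one]
      exact Ideal.subset_span ⟨i, rfl⟩
    · rw [homogeneousComponent_of_mem (hℓ i), if_neg hne]
      exact zero_mem _
  | algebraMap c =>
    rcases Nat.eq_zero_or_pos e with rfl | he
    · rw [pow_zero, Ideal.one_eq_top]; exact Submodule.mem_top
    · have : (algebraMap k (MvPolynomial σ k) c) ∈ homogeneousSubmodule σ k 0 :=
        isHomogeneous_C σ c
      rw [homogeneousComponent_of_mem this, if_neg (by omega)]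
      exact zero_mem _
  | add x y hx hy ihx ihy =>
    rw [map_add]; exact add_mem (ihx e) (ihy e)
  | mul x y hx hy ihx ihy =>
    rw [aux_hc_mul]
    apply Ideal.sum_mem
    intro ij hij
    have he : ij.1 + ij.2 = e := Finset.HasAntidiagonal.mem_antidiagonal.mp hij
    rw [← he, pow_add]
    exact Ideal.mul_mem_mul (ihx ij.1) (ihy ij.2)

lemma aux_low_comp_zero {σ : Type*} {r d : ℕ} (f : Fin r → MvPolynomial σ k)
    (hf : ∀ i, (f i).IsHomogeneous d) {p : MvPolynomial σ k}
    (hp : p ∈ Ideal.span (Set.range f)) {e : ℕ} (he : e < d) :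
    homogeneousComponent e p = 0 := by
  induction hp using Submodule.span_induction generalizing e with
  | mem x hx =>
    rcases hx with ⟨i, rfl⟩
    rw [homogeneousComponent_of_mem (hf i), if_neg (by omega)]
  | zero => rw [map_zero]
  | add x y hx hy ihx ihy => rw [map_add, ihx he, ihy he, add_zero]
  | smul a x hx ihx =>
    rw [smul_eq_mul, aux_hc_mul]
    apply Finset.sum_eq_zero
    intro ij hij
    have : ij.1 + ij.2 = e := Finset.HasAntidiagonal.mem_antidiagonal.mp hij
    rw [ihx (show ij.2 < d by omega), mul_zero]

lemma aux_span_comp {σ : Type*} {r : ℕ} (ℓ : Fin r → MvPolynomial σ k)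
    (hℓ : ∀ i, (ℓ i).IsHomogeneous 1) {m : MvPolynomial σ k}
    (hm : m ∈ Ideal.span (Set.range ℓ)) :
    homogeneousComponent 0 m = 0 ∧
      homogeneousComponent 1 m ∈ Algebra.adjoin k (Set.range ℓ) := by
  induction hm using Submodule.span_induction with
  | mem x hx =>
    rcases hx with ⟨i, rfl⟩
    constructor
    · rw [homogeneousComponent_of_mem (hℓ i), if_neg (by omega)]
    · rw [homogeneousComponent_of_mem (hℓ i), if_pos rfl]
      exact Algebra.subset_adjoin ⟨i, rfl⟩
  | zero => exact ⟨by simp, by rw [map_zero]; exact zero_mem _⟩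
  | add x y hx hy ihx ihy =>
    refine ⟨by rw [map_add, ihx.1, ihy.1, add_zero], ?_⟩
    rw [map_add]; exact add_mem ihx.2 ihy.2
  | smul a x hx ihx =>
    constructor
    · rw [smul_eq_mul, aux_hc_mul]
      apply Finset.sum_eq_zero
      intro ij hij
      have : ij.1 + ij.2 = 0 := Finset.HasAntidiagonal.mem_antidiagonal.mp hij
      have h1 : ij.2 = 0 := by omega
      rw [h1, ihx.1, mul_zero]
    · rw [smul_eq_mul, aux_hc_mul]
      have : Finset.HasAntidiagonal.antidiagonal 1 = {((0 : ℕ), (1 : ℕ)), (1, 0)} := by decide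
      rw [this]
      rw [Finset.sum_insert (by decide), Finset.sum_singleton]
      simp only [ihx.1, mul_zero, add_zero]
      rw [homogeneousComponent_zero]
      exact mul_mem ((Algebra.adjoin k (Set.range ℓ)).algebraMap_mem _) ihx.2

lemma aux_pow_comp {σ : Type*} {r : ℕ} (ℓ : Fin r → MvPolynomial σ k)
    (hℓ : ∀ i, (ℓ i).IsHomogeneous 1) (d : ℕ) {g : MvPolynomial σ k}
    (hg : g ∈ (Ideal.span (Set.range ℓ)) ^ d) :
    (∀ e < d, homogeneousComponent e g = 0) ∧
      homogeneousComponent d g ∈ Algebra.adjoin k (Set.range ℓ) := by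
  induction d generalizing g with
  | zero =>
    refine ⟨fun e he => absurd he (Nat.not_lt_zero e), ?_⟩
    rw [homogeneousComponent_zero]
    exact (Algebra.adjoin k (Set.range ℓ)).algebraMap_mem _
  | succ d ih =>
    rw [pow_succ'] at hg
    induction hg using Submodule.mul_induction_on' with
    | mem_mul_mem m hm x hx =>
      obtain ⟨hx0, hxd⟩ := ih hx
      obtain ⟨hm0, hm1⟩ := aux_span_comp ℓ hℓ hm
      have hterm : ∀ e ≤ d + 1, ∀ ij ∈ Finset.HasAntidiagonal.antidiagonal e, ij ≠ (1, d) →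
          homogeneousComponent ij.1 m * homogeneousComponent ij.2 x = 0 := by
        intro e he ij hij hne
        have hsum : ij.1 + ij.2 = e := Finset.HasAntidiagonal.mem_antidiagonal.mp hij
        by_cases h2 : ij.2 < d
        · rw [hx0 ij.2 h2, mul_zero]
        · have : ij.2 = d ∨ ij.2 = d + 1 := by omega
          rcases this with h | h
          · have h1 : ij.1 ≠ 1 := by
              intro hc; exact hne (by rw [← hc, ← h])
            have : ij.1 = 0 := by
              rcases Nat.lt_or_ge ij.1 1 with hh | hh
              · omega
              · exfalso; omega
            rw [this, hm0, zero_mul]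
          · have : ij.1 = 0 := by omega
            rw [this, hm0, zero_mul]
      constructor
      · intro e he
        rw [aux_hc_mul]
        apply Finset.sum_eq_zero
        intro ij hij
        apply hterm e (by omega) ij hij
        intro hc
        have := Finset.HasAntidiagonal.mem_antidiagonal.mp hij
        rw [hc] at this
        simp at this
        omega
      · rw [aux_hc_mul]
        rw [Finset.sum_eq_single ((1 : ℕ), d)]
        · exact mul_mem hm1 hxd
        · intro ij hij hne
          exact hterm (d+1) le_rfl ij hij hne
        · intro hc
          exact absurd (Finset.HasAntidiagonal.mem_antidiagonal.mpr (by omega)) hc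
    | add x y hx hy ihx ihy =>
      refine ⟨fun e he => by rw [map_add, ihx.1 e he, ihy.1 e he, add_zero], ?_⟩
      rw [map_add]; exact add_mem ihx.2 ihy.2

lemma aux_common_zero {n r : ℕ} (hr : r ≤ n) (ℓ : Fin r → MvPolynomial (Fin (n+1)) k)
    (hℓ : ∀ i, (ℓ i).IsHomogeneous 1) :
    ∃ a : Fin (n+1) → k, a ≠ 0 ∧ ∀ i, eval a (ℓ i) = 0 := by
  classical
  let φ : (Fin (n+1) → k) →ₗ[k] (Fin r → k) :=
    LinearMap.pi fun i => ∑ j, (coeff (Finsupp.single j 1) (ℓ i)) • LinearMap.proj j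
  have hker : LinearMap.ker φ ≠ ⊥ := by
    intro hbot
    have hinj : Function.Injective φ := LinearMap.ker_eq_bot.mp hbot
    have := LinearMap.finrank_le_finrank_of_injective hinj
    rw [Module.finrank_pi, Module.finrank_pi] at this
    simp at this
    omega
  obtain ⟨a, haker, ha0⟩ := Submodule.exists_mem_ne_zero_of_ne_bot hker
  refine ⟨a, ha0, fun i => ?_⟩
  have : φ a i = 0 := by rw [LinearMap.mem_ker.mp haker]; rfl
  rw [aux_eval_hom_one (ℓ i) (hℓ i) a]
  rw [← this]
  simp [φ, LinearMap.pi_apply]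

lemma aux_point_span {n : ℕ} (a : Fin (n+1) → k) (ha : a ≠ 0) :
    ∃ ℓ : Fin n → MvPolynomial (Fin (n+1)) k,
      (∀ i, (ℓ i).IsHomogeneous 1) ∧ pointIdeal a = Ideal.span (Set.range ℓ) := by
  classical
  let φa : (Fin (n+1) → k) →ₗ[k] k := ∑ j, a j • LinearMap.proj j
  have hφa : φa ≠ 0 := by
    obtain ⟨j0, hj0⟩ : ∃ j0, a j0 ≠ 0 := by
      by_contra hc
      push_neg at hc
      exact ha (funext hc)
    intro hc
    have : φa (Pi.single j0 1) = 0 := by rw [hc]; rfl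
    simp [φa, LinearMap.sum_apply, Pi.single_apply] at this
    exact hj0 this
  have hrange : LinearMap.range φa = ⊤ := by
    obtain ⟨x, hx⟩ : ∃ x, φa x ≠ 0 := by
      by_contra hc
      push_neg at hc
      exact hφa (LinearMap.ext hc)
    rw [LinearMap.range_eq_top]
    intro y
    exact ⟨(y / φa x) • x, by rw [map_smul, smul_eq_mul, div_mul_cancel₀ y hx]⟩
  have hker : Module.finrank k (LinearMap.ker φa) = n := by
    have h1 := LinearMap.finrank_range_add_finrank_ker φa
    rw [hrange] at h1
    simp [Module.finrank_pi] at h1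
    omega
  let b : Module.Basis (Fin n) k (LinearMap.ker φa) := Module.finBasisOfFinrankEq k _ hker
  let T : (Fin (n+1) → k) →ₗ[k] MvPolynomial (Fin (n+1)) k :=
    ∑ j, (LinearMap.proj j).smulRight (X j)
  have hT : ∀ c, T c = ∑ j, c j • (X j : MvPolynomial (Fin (n+1)) k) := fun c => by
    simp [T, LinearMap.sum_apply]
  let ℓ : Fin n → MvPolynomial (Fin (n+1)) k := fun i => T (b i : Fin (n+1) → k)
  have hhom : ∀ i, (ℓ i).IsHomogeneous 1 := by
    intro i
    rw [← mem_homogeneousSubmodule]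
    rw [show ℓ i = T (b i) from rfl, hT]
    apply Submodule.sum_mem
    intro j _
    exact Submodule.smul_mem _ _ ((mem_homogeneousSubmodule 1 _).mpr (isHomogeneous_X k j))
  have hTeval : ∀ c, eval a (T c) = φa c := by
    intro c
    rw [hT, map_sum]
    simp [smul_eq_C_mul, φa, LinearMap.sum_apply, mul_comm]
  have hveval : ∀ i, eval a (ℓ i) = 0 := by
    intro i
    rw [show ℓ i = T (b i) from rfl, hTeval]
    exact LinearMap.mem_ker.mp (b i).2
  refine ⟨ℓ, hhom, le_antisymm ?_ ?_⟩
  · rw [pointIdeal, Ideal.span_le]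
    rintro p ⟨hp1, hpe⟩
    set c : Fin (n+1) → k := fun j => coeff (Finsupp.single j 1) p with hc
    have hpc : p = T c := by rw [hT]; exact aux_hom_one_repr p hp1
    have hcker : c ∈ LinearMap.ker φa := by
      rw [LinearMap.mem_ker, ← hTeval, ← hpc, hpe]
    have h1 : (⟨c, hcker⟩ : LinearMap.ker φa) ∈ Submodule.span k (Set.range b) := by
      rw [b.span_eq]; trivial
    have h2 : c ∈ Submodule.span k (Set.range fun i => ((b i : Fin (n+1) → k))) := by
      have := Submodule.mem_map_of_mem (f := (LinearMap.ker φa).subtype) h1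
      rwa [Submodule.map_span, ← Set.range_comp] at this
    have hp : p ∈ Submodule.span k (Set.range ℓ) := by
      rw [hpc]
      have := Submodule.mem_map_of_mem (f := T) h2
      rwa [Submodule.map_span, ← Set.range_comp] at this
    refine Submodule.span_induction ?_ ?_ ?_ ?_ hp
    · intro x hx; exact Ideal.subset_span hx
    · exact zero_mem _
    · intro x y _ _ hx hy; exact add_mem hx hy
    · intro t x _ hx
      rw [smul_eq_C_mul]
      exact Ideal.mul_mem_left _ _ hx
  · rw [Ideal.span_le]
    rintro p ⟨i, rfl⟩
    exact Ideal.subset_span ⟨hhom i, hveval i⟩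

theorem stmt1 {n d r : ℕ} [IsAlgClosed k]
    (J : Ideal (MvPolynomial (Fin (n + 1)) k)) (f : Fin r → MvPolynomial (Fin (n + 1)) k)
    (hgen : J = Ideal.span (Set.range f)) (hhom : ∀ i, (f i).IsHomogeneous d) :
    essCodim J ≤ n ↔ ∃ a : Fin (n + 1) → k, a ≠ 0 ∧ J ≤ (pointIdeal a) ^ d := by
  constructor
  · intro hle
    have hmem : (n + 1) ∈ {r : ℕ | ∃ ℓ : Fin r → MvPolynomial (Fin (n + 1)) k,
        (∀ i, (ℓ i).IsHomogeneous 1) ∧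
        ∃ S : Set (MvPolynomial (Fin (n + 1)) k),
          S ⊆ (Algebra.adjoin k (Set.range ℓ) :
            Subalgebra k (MvPolynomial (Fin (n + 1)) k)) ∧
          J = Ideal.span S} := by
      refine ⟨X, fun j => isHomogeneous_X k j, (J : Set (MvPolynomial (Fin (n + 1)) k)),
        ?_, (Ideal.span_eq J).symm⟩
      rw [adjoin_range_X]
      intro x _
      trivial
    have hsinf := Nat.sInf_mem (⟨n + 1, hmem⟩ : Set.Nonempty _)
    obtain ⟨ℓ, hℓ, S, hSadj, hJS⟩ := hsinf
    obtain ⟨a, ha0, haz⟩ := aux_common_zero hle ℓ hℓ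
    refine ⟨a, ha0, ?_⟩
    have hMP : Ideal.span (Set.range ℓ) ≤ pointIdeal a := by
      rw [Ideal.span_le]
      rintro p ⟨i, rfl⟩
      exact Ideal.subset_span ⟨hℓ i, haz i⟩
    rw [hJS, Ideal.span_le]
    intro s hs
    have hs1 : s ∈ Algebra.adjoin k (Set.range ℓ) := hSadj hs
    have hsJ : s ∈ J := by rw [hJS]; exact Ideal.subset_span hs
    rw [SetLike.mem_coe, ← sum_homogeneousComponent s]
    apply Ideal.sum_mem
    intro e _
    rcases Nat.lt_or_ge e d with hlt | hge
    · rw [aux_low_comp_zero f hhom (by rw [← hgen]; exact hsJ) hlt]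
      exact zero_mem _
    · refine Ideal.pow_right_mono hMP d ?_
      refine Ideal.pow_le_pow_right hge ?_
      exact aux_adjoin_comp ℓ hℓ hs1 e
  · rintro ⟨a, ha0, hJP⟩
    obtain ⟨ℓ, hℓ, hpt⟩ := aux_point_span a ha0
    apply Nat.sInf_le
    refine ⟨ℓ, hℓ, Set.range f, ?_, hgen⟩
    rintro p ⟨i, rfl⟩
    have hfi : f i ∈ (Ideal.span (Set.range ℓ)) ^ d := by
      rw [← hpt]
      exact hJP (by rw [hgen]; exact Ideal.subset_span ⟨i, rfl⟩)
    have := (aux_pow_comp ℓ hℓ d hfi).2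
    rwa [homogeneousComponent_of_mem (hhom i), if_pos rfl] at this
end
end

section
/- Let 𝔞 ⊆ k[x_0,...,x_n] be a monomial ideal, where k has characteristic p > 0. Then fpt(𝔞) = 1/μ, where μ = inf{ t > 0 : t·(1,...,1) ∈ Γ(𝔞) } and Γ(𝔞) is the Newton polytope of 𝔞. -/
open MvPolynomial Filter

noncomputable section

variable {k : Type*} [Field k]

/-- The `q`-th bracket power of an ideal. -/
def frobPow {R : Type*} [CommRing R] (q : ℕ) (I : Ideal R) : Ideal R :=
  Ideal.span ((fun x => x ^ q) '' (I : Set R))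

/-- The homogeneous maximal ideal of `k[x_0,…,x_n]`. -/
def maxIdl (n : ℕ) (k : Type*) [Field k] : Ideal (MvPolynomial (Fin (n + 1)) k) :=
  Ideal.span (Set.range X)

/-- `ν_I(q) = max{r : I^r ⊄ 𝔪^{[q]}}`. -/
def nuFn {n : ℕ} (I : Ideal (MvPolynomial (Fin (n + 1)) k)) (q : ℕ) : ℕ :=
  sSup {r : ℕ | ¬ I ^ r ≤ frobPow q (maxIdl n k)}

/-- A monomial ideal. -/
def IsMonomialIdeal {n : ℕ} (𝔞 : Ideal (MvPolynomial (Fin (n + 1)) k)) : Prop :=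
  ∃ S : Set (Fin (n + 1) →₀ ℕ),
    𝔞 = Ideal.span ((fun s => (monomial s (1 : k) : MvPolynomial (Fin (n + 1)) k)) '' S)

/-- The Newton polytope of a monomial ideal: the convex hull of the exponent vectors of
the monomials belonging to the ideal. -/
def newtonPolytope {n : ℕ} (𝔞 : Ideal (MvPolynomial (Fin (n + 1)) k)) :
    Set (Fin (n + 1) → ℝ) :=
  convexHull ℝ {v | ∃ s : Fin (n + 1) →₀ ℕ,
    (monomial s (1 : k) : MvPolynomial (Fin (n + 1)) k) ∈ 𝔞 ∧ v = fun i => (s i : ℝ)}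

open Pointwise

lemma aux_monomial_mem_span_iff {σ : Type*} {S : Set (σ →₀ ℕ)} {s : σ →₀ ℕ} :
    (monomial s (1:k)) ∈ Ideal.span ((fun a => (monomial a (1:k))) '' S) ↔ ∃ a ∈ S, a ≤ s := by
  classical
  rw [mem_ideal_span_monomial_image]
  constructor
  · intro h
    exact h s (by rw [mem_support_iff, coeff_monomial]; simp)
  · rintro ⟨a, ha, hle⟩ xi hxi
    rw [mem_support_iff, coeff_monomial] at hxi
    have : xi = s := by
      by_contra hne
      exact hxi (if_neg fun he => hne he.symm)
    subst this
    exact ⟨a, ha, hle⟩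

lemma aux_prod_monomial {σ : Type*} : ∀ {m : ℕ} (f : Fin m → (σ →₀ ℕ)),
    (∏ j, (monomial (f j) (1:k))) = monomial (∑ j, f j) 1 := by
  intro m
  induction m with
  | zero => intro f; simp [monomial_zero']
  | succ m ih =>
    intro f
    rw [Fin.prod_univ_succ, Fin.sum_univ_succ, ih, monomial_mul, one_mul]

lemma aux_prod_mem_pow {R : Type*} [CommRing R] (I : Ideal R) :
    ∀ {m : ℕ} (f : Fin m → R), (∀ j, f j ∈ I) → (∏ j, f j) ∈ I ^ m := by
  intro m
  induction m with
  | zero => intro f _; simp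
  | succ m ih =>
    intro f h
    rw [Fin.prod_univ_succ, pow_succ']
    exact Ideal.mul_mem_mul (h 0) (ih _ (fun j => h j.succ))

lemma aux_frobPow_span {R : Type*} [CommRing R] {p : ℕ} (hp : p.Prime) [CharP R p] (e : ℕ)
    (T : Set R) :
    frobPow (p ^ e) (Ideal.span T) = Ideal.span ((fun x => x ^ p ^ e) '' T) := by
  haveI := Fact.mk hp
  have h1 : frobPow (p ^ e) (Ideal.span T)
      = Ideal.map (iterateFrobenius R p e) (Ideal.span T) := rfl
  rw [h1, Ideal.map_span]
  rfl

lemma aux_mem_frobPow_maxIdl {n : ℕ} {p : ℕ} (hp : p.Prime) [CharP k p] (e : ℕ)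
    (f : MvPolynomial (Fin (n+1)) k) :
    f ∈ frobPow (p ^ e) (maxIdl n k) ↔ ∀ m ∈ f.support, ∃ i, p ^ e ≤ m i := by
  classical
  have h0 : (Set.range (X : Fin (n+1) → MvPolynomial (Fin (n+1)) k))
      = (fun a => (monomial a (1:k))) '' (Set.range fun i => Finsupp.single i 1) := by
    rw [← Set.range_comp]; rfl
  have h2 : ((fun x => x ^ p ^ e) '' ((fun a => (monomial a (1:k))) ''
        (Set.range fun i : Fin (n+1) => Finsupp.single i 1)))
      = (fun a => (monomial a (1:k))) ''
        (Set.range fun i : Fin (n+1) => Finsupp.single i (p ^ e)) := by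
    have hfun : ((fun x => x ^ p ^ e) ∘ (fun a => (monomial a (1:k)))
          ∘ fun i : Fin (n+1) => Finsupp.single i 1)
        = ((fun a => (monomial a (1:k))) ∘ fun i : Fin (n+1) => Finsupp.single i (p ^ e)) := by
      funext i
      show (monomial (Finsupp.single i 1) (1:k)) ^ p ^ e = monomial (Finsupp.single i (p ^ e)) (1:k)
      rw [monomial_pow, one_pow, Finsupp.smul_single, smul_eq_mul, mul_one]
    rw [← Set.range_comp, ← Set.range_comp, ← Set.range_comp, hfun]
  rw [maxIdl, h0, aux_frobPow_span hp, h2, mem_ideal_span_monomial_image]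
  constructor
  · intro h m hm
    obtain ⟨si, ⟨i, rfl⟩, hle⟩ := h m hm
    exact ⟨i, by simpa using (Finsupp.single_le_iff).mp hle⟩
  · intro h m hm
    obtain ⟨i, hi⟩ := h m hm
    exact ⟨Finsupp.single i (p ^ e), ⟨i, rfl⟩, Finsupp.single_le_iff.mpr hi⟩

lemma aux_not_pow_le_iff {n : ℕ} {p : ℕ} (hp : p.Prime) [CharP k p]
    (S : Set (Fin (n+1) →₀ ℕ)) (e r : ℕ) :
    (¬ (Ideal.span ((fun s => (monomial s (1:k) : MvPolynomial (Fin (n+1)) k)) '' S)) ^ r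
        ≤ frobPow (p ^ e) (maxIdl n k)) ↔
    ∃ f : Fin r → (Fin (n+1) →₀ ℕ), (∀ j, f j ∈ S) ∧ ∀ i, (∑ j, f j) i < p ^ e := by
  classical
  constructor
  · intro hne
    by_contra hno
    push_neg at hno
    apply hne
    rw [Ideal.span, Submodule.span_pow]
    rw [Submodule.span_le]
    intro x hx
    obtain ⟨g, hgx⟩ := Set.mem_pow.mp hx
    have hmem : ∀ j, ∃ a ∈ S, (monomial a (1:k) : MvPolynomial (Fin (n+1)) k) = ↑(g j) :=
      fun j => (g j).2
    choose s hsS hs using hmem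
    have hxeq : x = monomial (∑ j, s j) (1:k) := by
      rw [← hgx, List.prod_ofFn, ← aux_prod_monomial]
      exact Finset.prod_congr rfl fun j _ => (hs j).symm
    rw [hxeq]
    rw [SetLike.mem_coe, aux_mem_frobPow_maxIdl hp]
    intro m hm
    rw [mem_support_iff, coeff_monomial] at hm
    have hms : m = ∑ j, s j := by
      by_contra hne'
      exact hm (if_neg fun he => hne' he.symm)
    subst hms
    obtain ⟨i, hi⟩ := hno s hsS
    exact ⟨i, hi⟩
  · rintro ⟨f, hfS, hflt⟩ hle
    have hmem : (monomial (∑ j, f j) (1:k) : MvPolynomial (Fin (n+1)) k)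
        ∈ (Ideal.span ((fun s => (monomial s (1:k) : MvPolynomial (Fin (n+1)) k)) '' S)) ^ r := by
      rw [← aux_prod_monomial]
      exact aux_prod_mem_pow _ _ fun j => Ideal.subset_span ⟨f j, hfS j, rfl⟩
    have hsup : (∑ j, f j) ∈ (monomial (∑ j, f j) (1:k) : MvPolynomial (Fin (n+1)) k).support := by
      rw [mem_support_iff, coeff_monomial]
      simp
    obtain ⟨i, hi⟩ := (aux_mem_frobPow_maxIdl hp e _).mp (hle hmem) _ hsup
    exact absurd hi (not_le.mpr (hflt i))

lemma aux_nat_hull {m : ℕ} (u : Fin m → ℝ) (hu : ∀ i, 0 ≤ u i) :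
    u ∈ convexHull ℝ {v : Fin m → ℝ | ∀ i, ∃ c : ℕ, v i = c} := by
  have h : {v : Fin m → ℝ | ∀ i, ∃ c : ℕ, v i = c}
      = Set.pi Set.univ (fun _ => {x : ℝ | ∃ c : ℕ, x = c}) := by
    ext v; simp [Set.mem_pi]
  rw [h]
  apply mem_convexHull_pi
  intro i _
  have h1 : (⌊u i⌋₊ : ℝ) ≤ u i := Nat.floor_le (hu i)
  have h2 : u i ≤ ((⌊u i⌋₊ + 1 : ℕ) : ℝ) := by
    push_cast; exact (Nat.lt_floor_add_one _).le
  have hseg : u i ∈ segment ℝ ((⌊u i⌋₊ : ℕ) : ℝ) ((⌊u i⌋₊ + 1 : ℕ) : ℝ) := by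
    rw [segment_eq_Icc (h1.trans h2)]
    exact ⟨h1, h2⟩
  refine segment_subset_convexHull ?_ ?_ hseg
  · exact ⟨_, rfl⟩
  · exact ⟨_, rfl⟩

lemma aux_shift_mem {n : ℕ} (𝔞 : Ideal (MvPolynomial (Fin (n+1)) k))
    {a : Fin (n+1) →₀ ℕ} (ha : (monomial a (1:k) : MvPolynomial (Fin (n+1)) k) ∈ 𝔞)
    (u : Fin (n+1) → ℝ) (hu : ∀ i, 0 ≤ u i) :
    ((fun i => (a i : ℝ)) + u) ∈ newtonPolytope 𝔞 := by
  classical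
  set B : Set (Fin (n+1) → ℝ) := {v | ∃ s : Fin (n + 1) →₀ ℕ,
    (monomial s (1 : k) : MvPolynomial (Fin (n + 1)) k) ∈ 𝔞 ∧ v = fun i => (s i : ℝ)} with hB
  have hsub : ({(fun i => (a i : ℝ))} : Set (Fin (n+1) → ℝ))
      + {v : Fin (n+1) → ℝ | ∀ i, ∃ c : ℕ, v i = c} ⊆ B := by
    rintro x ⟨y, hy, v, hv, rfl⟩
    rcases hy with rfl
    choose c hc using hv
    refine ⟨a + Finsupp.equivFunOnFinite.symm c, ?_, ?_⟩
    · have : (monomial (a + Finsupp.equivFunOnFinite.symm c) (1:k) : MvPolynomial (Fin (n+1)) k)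
          = monomial a 1 * monomial (Finsupp.equivFunOnFinite.symm c) 1 := by
        rw [monomial_mul, one_mul]
      rw [this]
      exact Ideal.mul_mem_right _ _ ha
    · funext i
      simp only [Pi.add_apply, Finsupp.coe_add, Finsupp.coe_equivFunOnFinite_symm]
      push_cast
      rw [hc i]
  have hmem : (fun i => (a i : ℝ)) + u ∈ convexHull ℝ
      (({(fun i => (a i : ℝ))} : Set (Fin (n+1) → ℝ))
        + {v : Fin (n+1) → ℝ | ∀ i, ∃ c : ℕ, v i = c}) := by
    rw [convexHull_add, convexHull_singleton]
    exact Set.add_mem_add rfl (aux_nat_hull u hu)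
  exact convexHull_mono hsub hmem

lemma aux_diag_mem_iff {n : ℕ} (S : Set (Fin (n+1) →₀ ℕ)) (t : ℝ) :
    ((fun _ => t) : Fin (n+1) → ℝ) ∈ newtonPolytope
        (Ideal.span ((fun s => (monomial s (1:k) : MvPolynomial (Fin (n+1)) k)) '' S)) ↔
    ∃ (m : ℕ) (a : Fin m → (Fin (n+1) →₀ ℕ)) (w : Fin m → ℝ),
      (∀ j, a j ∈ S) ∧ (∀ j, 0 ≤ w j) ∧ (∑ j, w j) = 1 ∧
        ∀ i, (∑ j, w j * ((a j) i : ℝ)) ≤ t := by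
  classical
  constructor
  · intro h
    rw [newtonPolytope, mem_convexHull_iff_exists_fintype] at h
    obtain ⟨ι, hι, w, z, hw0, hw1, hz, hsum⟩ := h
    choose sf hs1 hs2 using hz
    choose af haS hale using fun j => aux_monomial_mem_span_iff.mp (hs1 j)
    refine ⟨Fintype.card ι, af ∘ (Fintype.equivFin ι).symm, w ∘ (Fintype.equivFin ι).symm,
      fun j => haS _, fun j => hw0 _, ?_, ?_⟩
    · simp only [Function.comp]
      rw [Equiv.sum_comp (Fintype.equivFin ι).symm w]
      exact hw1
    · intro i
      simp only [Function.comp]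
      rw [Equiv.sum_comp (Fintype.equivFin ι).symm (fun j => w j * ((af j) i : ℝ))]
      have hle : ∀ j : ι, w j * ((af j) i : ℝ) ≤ w j * ((sf j) i : ℝ) := by
        intro j
        apply mul_le_mul_of_nonneg_left _ (hw0 j)
        exact_mod_cast (Finsupp.le_def.mp (hale j)) i
      calc ∑ j, w j * ((af j) i : ℝ) ≤ ∑ j, w j * ((sf j) i : ℝ) :=
            Finset.sum_le_sum fun j _ => hle j
        _ = t := by
            have := congrFun hsum i
            simp only [Finset.sum_apply, Pi.smul_apply, smul_eq_mul] at this
            rw [← this]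
            exact Finset.sum_congr rfl fun j _ => by rw [hs2 j]
  · rintro ⟨m, a, w, haS, hw0, hw1, hbd⟩
    set u : Fin (n+1) → ℝ := fun i => t - ∑ j, w j * ((a j) i : ℝ) with hu_def
    have hu : ∀ i, 0 ≤ u i := fun i => by
      rw [hu_def]; simp only; linarith [hbd i]
    have hpt : ∀ j : Fin m, ((fun i => ((a j) i : ℝ)) + u) ∈ newtonPolytope
        (Ideal.span ((fun s => (monomial s (1:k) : MvPolynomial (Fin (n+1)) k)) '' S)) :=
      by
        intro j
        refine aux_shift_mem _ ?_ u hu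
        exact Ideal.subset_span ⟨a j, haS j, rfl⟩
    have heq : ((fun _ => t) : Fin (n+1) → ℝ)
        = ∑ j, w j • ((fun i => ((a j) i : ℝ)) + u) := by
      funext i
      simp only [Finset.sum_apply, Pi.smul_apply, Pi.add_apply, smul_eq_mul]
      have : ∑ j, w j * (((a j) i : ℝ) + u i)
          = (∑ j, w j * ((a j) i : ℝ)) + (∑ j, w j) * u i := by
        rw [Finset.sum_mul]
        rw [← Finset.sum_add_distrib]
        exact Finset.sum_congr rfl fun j _ => by ring
      rw [this, hw1, one_mul, hu_def]
      simp
    rw [heq]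
    exact (convex_convexHull ℝ _).sum_mem (fun j _ => hw0 j) hw1 (fun j _ => hpt j)

theorem stmt10 {n : ℕ} {p : ℕ} (hp : p.Prime) [CharP k p]
    (𝔞 : Ideal (MvPolynomial (Fin (n + 1)) k)) (hmono : IsMonomialIdeal 𝔞)
    (hbot : 𝔞 ≠ ⊥) (htop : 𝔞 ≠ ⊤) (c : ℝ)
    (hfpt : Tendsto (fun e : ℕ => (nuFn 𝔞 (p ^ e) : ℝ) / (p : ℝ) ^ e) atTop (nhds c)) :
    c = 1 / sInf {t : ℝ | 0 < t ∧ (fun _ => t) ∈ newtonPolytope 𝔞} := by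
  classical
  obtain ⟨S, rfl⟩ := hmono
  set 𝔄 : Ideal (MvPolynomial (Fin (n + 1)) k) :=
    Ideal.span ((fun s => (monomial s (1 : k) : MvPolynomial (Fin (n + 1)) k)) '' S) with h𝔄
  -- basic facts about S
  have hS0 : (0 : Fin (n + 1) →₀ ℕ) ∉ S := by
    intro h0
    apply htop
    rw [Ideal.eq_top_iff_one]
    have h1 : (monomial (0 : Fin (n + 1) →₀ ℕ) (1 : k) : MvPolynomial (Fin (n + 1)) k) ∈ 𝔄 :=
      Ideal.subset_span ⟨0, h0, rfl⟩
    simpa [monomial_zero'] using h1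
  have hSne : S.Nonempty := by
    rw [Set.nonempty_iff_ne_empty]
    intro h
    apply hbot
    rw [h𝔄, h]
    simp
  set T : Set ℝ := {t : ℝ | 0 < t ∧ (fun _ => t) ∈ newtonPolytope 𝔄} with hT
  have hdiag : ∀ t : ℝ, (((fun _ => t) : Fin (n + 1) → ℝ) ∈ newtonPolytope 𝔄) ↔
      ∃ (m : ℕ) (a : Fin m → (Fin (n + 1) →₀ ℕ)) (w : Fin m → ℝ),
        (∀ j, a j ∈ S) ∧ (∀ j, 0 ≤ w j) ∧ (∑ j, w j) = 1 ∧
          ∀ i, (∑ j, w j * ((a j) i : ℝ)) ≤ t := fun t => aux_diag_mem_iff S t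
  obtain ⟨a0, ha0⟩ := hSne
  have hTne : T.Nonempty := by
    refine ⟨(∑ i, ((a0 i : ℝ))) + 1, ?_, ?_⟩
    · positivity
    · rw [hdiag]
      refine ⟨1, fun _ => a0, fun _ => 1, fun _ => ha0, fun _ => zero_le_one, by simp, ?_⟩
      intro i
      rw [Fin.sum_univ_one, one_mul]
      have h1 : (a0 i : ℝ) ≤ ∑ i', (a0 i' : ℝ) :=
        Finset.single_le_sum (f := fun i' => ((a0 i' : ℕ) : ℝ))
          (fun _ _ => by positivity) (Finset.mem_univ i)
      linarith
  have hTlb : ∀ t ∈ T, 1 / (n + 1 : ℝ) ≤ t := by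
    intro t ht
    obtain ⟨htpos, hmem⟩ := ht
    obtain ⟨m, a, w, haS, hw0, hw1, hbd⟩ := (hdiag t).mp hmem
    have hone : ∀ j : Fin m, (1 : ℝ) ≤ ∑ i, ((a j) i : ℝ) := by
      intro j
      have hne : a j ≠ 0 := fun h => hS0 (h ▸ haS j)
      obtain ⟨i0, hi0⟩ := Finsupp.ne_iff.mp hne
      have h1 : (1 : ℕ) ≤ (a j) i0 := Nat.one_le_iff_ne_zero.mpr (by simpa using hi0)
      have h2 : ((a j) i0 : ℝ) ≤ ∑ i, ((a j) i : ℝ) :=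
        Finset.single_le_sum (f := fun i => (((a j) i : ℕ) : ℝ))
          (fun _ _ => by positivity) (Finset.mem_univ i0)
      have h3 : (1 : ℝ) ≤ ((a j) i0 : ℝ) := by exact_mod_cast h1
      linarith
    have hkey : (1 : ℝ) ≤ (n + 1 : ℝ) * t := by
      have h4 : ∑ j, w j ≤ ∑ j, w j * (∑ i, ((a j) i : ℝ)) := by
        apply Finset.sum_le_sum
        intro j _
        nlinarith [hone j, hw0 j]
      have h5 : ∑ j, w j * (∑ i, ((a j) i : ℝ)) = ∑ i : Fin (n + 1), ∑ j, w j * ((a j) i : ℝ) := by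
        rw [← Finset.sum_comm]
        exact Finset.sum_congr rfl fun j _ => Finset.mul_sum _ _ _
      have h6 : ∑ i : Fin (n + 1), ∑ j, w j * ((a j) i : ℝ) ≤ ∑ _i : Fin (n + 1), t :=
        Finset.sum_le_sum fun i _ => hbd i
      have h7 : ∑ _i : Fin (n + 1), t = (n + 1 : ℝ) * t := by
        rw [Finset.sum_const, Finset.card_univ, Fintype.card_fin]
        push_cast
        ring
      linarith [hw1]
    have hn1 : (0 : ℝ) < (n + 1 : ℝ) := by positivity
    rw [div_le_iff₀ hn1]
    linarith [hkey]
  have hbddB : BddBelow T := ⟨1 / (n + 1 : ℝ), hTlb⟩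
  have hμpos : 0 < sInf T := lt_of_lt_of_le (by positivity) (le_csInf hTne hTlb)
  -- nuFn facts
  have hbddA : ∀ e : ℕ, BddAbove {r : ℕ | ¬ 𝔄 ^ r ≤ frobPow (p ^ e) (maxIdl n k)} := by
    intro e
    refine ⟨(n + 1) * p ^ e, ?_⟩
    intro r hr
    obtain ⟨f, hfS, hflt⟩ := (aux_not_pow_le_iff hp S e r).mp hr
    have hone : ∀ j : Fin r, 1 ≤ ∑ i, (f j) i := by
      intro j
      have hne : f j ≠ 0 := fun h => hS0 (h ▸ hfS j)
      obtain ⟨i0, hi0⟩ := Finsupp.ne_iff.mp hne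
      calc 1 ≤ (f j) i0 := Nat.one_le_iff_ne_zero.mpr (by simpa using hi0)
        _ ≤ ∑ i, (f j) i := Finset.single_le_sum (fun _ _ => Nat.zero_le _) (Finset.mem_univ i0)
    calc r = ∑ _j : Fin r, 1 := by simp
      _ ≤ ∑ j, ∑ i, (f j) i := Finset.sum_le_sum fun j _ => hone j
      _ = ∑ i : Fin (n + 1), ∑ j, (f j) i := Finset.sum_comm
      _ = ∑ i : Fin (n + 1), (∑ j, f j) i :=
          Finset.sum_congr rfl fun i _ => (Finsupp.finset_sum_apply _ _ _).symm
      _ ≤ ∑ _i : Fin (n + 1), p ^ e := Finset.sum_le_sum fun i _ => (hflt i).le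
      _ = (n + 1) * p ^ e := by simp [Finset.sum_const, Finset.card_univ, mul_comm]
  have hnu_mem : ∀ (e r : ℕ),
      (∃ f : Fin r → (Fin (n + 1) →₀ ℕ), (∀ j, f j ∈ S) ∧ ∀ i, (∑ j, f j) i < p ^ e) →
      r ≤ nuFn 𝔄 (p ^ e) := by
    intro e r h
    exact le_csSup (hbddA e) ((aux_not_pow_le_iff hp S e r).mpr h)
  have hzero : ∀ e : ℕ, 0 ∈ {r : ℕ | ¬ 𝔄 ^ r ≤ frobPow (p ^ e) (maxIdl n k)} := by
    intro e
    have h : ∃ f : Fin 0 → (Fin (n + 1) →₀ ℕ), (∀ j, f j ∈ S) ∧ ∀ i, (∑ j, f j) i < p ^ e :=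
      ⟨fun j => j.elim0, fun j => j.elim0, fun i => by simpa using pow_pos hp.pos e⟩
    exact (aux_not_pow_le_iff hp S e 0).mpr h
  have hnu_self : ∀ e : ℕ, ¬ 𝔄 ^ (nuFn 𝔄 (p ^ e)) ≤ frobPow (p ^ e) (maxIdl n k) :=
    fun e => Nat.sSup_mem ⟨0, hzero e⟩ (hbddA e)
  have hppos : (0 : ℝ) < p := by exact_mod_cast hp.pos
  have hpepos : ∀ e : ℕ, (0 : ℝ) < (p : ℝ) ^ e := fun e => by positivity
  have hpe1 : ∀ e : ℕ, (1 : ℝ) ≤ (p : ℝ) ^ e := by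
    intro e
    have h := Nat.one_le_pow e p hp.pos
    exact_mod_cast h
  -- upper bound : c ≤ 1 / sInf T
  have hub : ∀ e : ℕ, (nuFn 𝔄 (p ^ e) : ℝ) * sInf T ≤ (p : ℝ) ^ e := by
    intro e
    rcases Nat.eq_zero_or_pos (nuFn 𝔄 (p ^ e)) with h0 | hpos
    · rw [h0]
      push_cast
      rw [zero_mul]
      exact (hpepos e).le
    · set r := nuFn 𝔄 (p ^ e) with hrdef
      obtain ⟨f, hfS, hflt⟩ := (aux_not_pow_le_iff hp S e r).mp (hnu_self e)
      have hrR : (0 : ℝ) < r := by exact_mod_cast hpos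
      have ht0 : ((p : ℝ) ^ e) / r ∈ T := by
        constructor
        · positivity
        · rw [hdiag]
          refine ⟨r, f, fun _ => 1 / (r : ℝ), hfS, fun _ => by positivity, ?_, ?_⟩
          · rw [Finset.sum_const, Finset.card_univ, Fintype.card_fin]
            rw [nsmul_eq_mul, mul_one_div_cancel hrR.ne']
          · intro i
            have h2 : ∑ j, (f j) i < p ^ e := by
              rw [← Finsupp.finset_sum_apply]
              exact hflt i
            have h3 : (∑ j, ((f j) i : ℝ)) ≤ (p : ℝ) ^ e := by
              have h4 := h2.le
              have h5 : ((∑ j, (f j) i : ℕ) : ℝ) ≤ ((p ^ e : ℕ) : ℝ) := by exact_mod_cast h4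
              push_cast at h5
              exact h5
            calc ∑ j, (1 / (r : ℝ)) * ((f j) i : ℝ) = (∑ j, ((f j) i : ℝ)) / r := by
                  rw [Finset.sum_div]
                  exact Finset.sum_congr rfl fun j _ => by ring
              _ ≤ ((p : ℝ) ^ e) / r := by
                  have h9 := mul_le_mul_of_nonneg_right h3 (inv_nonneg.mpr hrR.le)
                  simpa [div_eq_mul_inv] using h9
      have hμle : sInf T ≤ ((p : ℝ) ^ e) / r := csInf_le hbddB ht0
      calc (r : ℝ) * sInf T ≤ (r : ℝ) * (((p : ℝ) ^ e) / r) :=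
            mul_le_mul_of_nonneg_left hμle hrR.le
        _ = (p : ℝ) ^ e := by field_simp
  have hcub : c ≤ 1 / sInf T := by
    apply le_of_tendsto hfpt
    apply Filter.Eventually.of_forall
    intro e
    rw [div_le_div_iff₀ (hpepos e) hμpos]
    have h := hub e
    linarith
  -- lower bound
  have hlbt : ∀ t ∈ T, 1 / t ≤ c := by
    intro t ht
    obtain ⟨htpos, hmem⟩ := ht
    obtain ⟨m, a, w, haS, hw0, hw1, hbd⟩ := (hdiag t).mp hmem
    have key : ∀ e : ℕ, ((p : ℝ) ^ e - 1) / t - m ≤ (nuFn 𝔄 (p ^ e) : ℝ) := by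
      intro e
      set kf : Fin m → ℕ := fun j => ⌊w j * ((p : ℝ) ^ e - 1) / t⌋₊ with hkf
      have hargnn : ∀ j, 0 ≤ w j * ((p : ℝ) ^ e - 1) / t := by
        intro j
        apply div_nonneg _ htpos.le
        apply mul_nonneg (hw0 j)
        linarith [hpe1 e]
      have hcard : Fintype.card ((j : Fin m) × Fin (kf j)) = ∑ j, kf j := by
        simp [Fintype.card_sigma]
      set eqv := Fintype.equivFinOfCardEq hcard with heqv
      set f : Fin (∑ j, kf j) → (Fin (n + 1) →₀ ℕ) := fun x => a (eqv.symm x).1 with hf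
      have hsumf : ∀ i, (∑ x, f x) i = ∑ j, kf j * (a j) i := by
        intro i
        rw [Finsupp.finset_sum_apply]
        rw [← Equiv.sum_comp eqv (fun x => (f x) i)]
        have h1 : ∀ x : (j : Fin m) × Fin (kf j), (f (eqv x)) i = (a x.1) i := by
          intro x
          rw [hf]
          simp
        rw [Finset.sum_congr rfl fun x _ => h1 x]
        calc ∑ x : (j : Fin m) × Fin (kf j), (a x.1) i
            = ∑ j, ∑ _y : Fin (kf j), (a j) i := Finset.sum_sigma _ _ _
          _ = ∑ j, kf j * (a j) i := Finset.sum_congr rfl fun j _ => by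
              rw [Finset.sum_const, Finset.card_univ, Fintype.card_fin, smul_eq_mul]
      have hwit : ∀ i, (∑ x, f x) i < p ^ e := by
        intro i
        rw [hsumf i]
        have hreal : ((∑ j, kf j * (a j) i : ℕ) : ℝ) ≤ (p : ℝ) ^ e - 1 := by
          push_cast
          have hterm : ∀ j : Fin m, ((kf j : ℝ)) * ((a j) i : ℝ)
              ≤ (w j * ((p : ℝ) ^ e - 1) / t) * ((a j) i : ℝ) := by
            intro j
            apply mul_le_mul_of_nonneg_right _ (by positivity)
            exact Nat.floor_le (hargnn j)
          calc ∑ j, (kf j : ℝ) * ((a j) i : ℝ)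
              ≤ ∑ j, (w j * ((p : ℝ) ^ e - 1) / t) * ((a j) i : ℝ) :=
                Finset.sum_le_sum fun j _ => hterm j
            _ = (((p : ℝ) ^ e - 1) / t) * ∑ j, w j * ((a j) i : ℝ) := by
                rw [Finset.mul_sum]
                exact Finset.sum_congr rfl fun j _ => by ring
            _ ≤ (((p : ℝ) ^ e - 1) / t) * t := by
                apply mul_le_mul_of_nonneg_left (hbd i)
                apply div_nonneg _ htpos.le
                linarith [hpe1 e]
            _ = (p : ℝ) ^ e - 1 := by field_simp
        have h6 : ((∑ j, kf j * (a j) i : ℕ) : ℝ) < ((p ^ e : ℕ) : ℝ) := by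
          push_cast at hreal ⊢
          linarith
        exact_mod_cast h6
      have hr : (∑ j, kf j) ≤ nuFn 𝔄 (p ^ e) :=
        hnu_mem e _ ⟨f, fun x => haS _, hwit⟩
      have h7 : ((p : ℝ) ^ e - 1) / t - m ≤ ((∑ j, kf j : ℕ) : ℝ) := by
        have h1 : ∑ j, (w j * ((p : ℝ) ^ e - 1) / t - 1) ≤ ∑ j, (kf j : ℝ) :=
          Finset.sum_le_sum fun j _ => by
            have := Nat.sub_one_lt_floor (w j * ((p : ℝ) ^ e - 1) / t)
            linarith
        have h2 : ∑ j, (w j * ((p : ℝ) ^ e - 1) / t - 1) = ((p : ℝ) ^ e - 1) / t - m := by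
          rw [Finset.sum_sub_distrib]
          congr 1
          · rw [← Finset.sum_div, ← Finset.sum_mul, hw1, one_mul]
          · simp
        have h3 : ((∑ j, kf j : ℕ) : ℝ) = ∑ j, (kf j : ℝ) := by push_cast; rfl
        rw [h3]
        linarith
      calc ((p : ℝ) ^ e - 1) / t - m ≤ ((∑ j, kf j : ℕ) : ℝ) := h7
        _ ≤ (nuFn 𝔄 (p ^ e) : ℝ) := by exact_mod_cast hr
    -- tendsto part
    have hp1 : (1 : ℝ) < p := by exact_mod_cast hp.one_lt
    have hinv : Tendsto (fun e : ℕ => ((p : ℝ) ^ e)⁻¹) atTop (nhds 0) :=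
      tendsto_inv_atTop_zero.comp (tendsto_pow_atTop_atTop_of_one_lt hp1)
    have hg : Tendsto (fun e : ℕ => 1 / t - (1 / t + m) * ((p : ℝ) ^ e)⁻¹) atTop
        (nhds (1 / t)) := by
      have h8 := Tendsto.const_sub (1 / t) (Tendsto.const_mul (1 / t + (m : ℝ)) hinv)
      simpa using h8
    refine le_of_tendsto_of_tendsto' hg hfpt ?_
    intro e
    rw [le_div_iff₀ (hpepos e)]
    have heq : (1 / t - (1 / t + (m : ℝ)) * ((p : ℝ) ^ e)⁻¹) * (p : ℝ) ^ e
        = ((p : ℝ) ^ e - 1) / t - m := by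
      field_simp
      ring
    rw [heq]
    exact key e
  -- conclude
  obtain ⟨t0, ht0⟩ := id hTne
  have hc0 : 0 < c := lt_of_lt_of_le (one_div_pos.mpr ht0.1) (hlbt t0 ht0)
  have hclb : 1 / sInf T ≤ c := by
    by_contra hcon
    push_neg at hcon
    have hμlt : sInf T < 1 / c := by
      rw [lt_div_iff₀ hc0]
      have h1 : c * sInf T < 1 := (lt_div_iff₀ hμpos).mp hcon
      linarith [mul_comm c (sInf T)]
    obtain ⟨t1, ht1T, ht1lt⟩ := exists_lt_of_csInf_lt hTne hμlt
    have h2 : c < 1 / t1 := by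
      rw [lt_div_iff₀ ht1T.1]
      have h3 := (lt_div_iff₀ hc0).mp ht1lt
      linarith [mul_comm t1 c]
    exact absurd (hlbt t1 ht1T) (not_le.mpr h2)
  exact le_antisymm hcub hclb
end
end

section
/- Let R be an F-finite F-pure ring of characteristic p > 0 and I ⊆ R an ideal containing a nonzerodivisor. Then fpt(I) = fpt(Ī), where Ī is the integral closure of I. -/
open Filter

noncomputable section

variable (p : ℕ) {R : Type*} [CommRing R]

/-- `R` is `F`-finite: `F_*R` is a finitely generated `R`-module, i.e. there is a finite
set `s` such that every element of `R` is an `R^p`-linear combination of elements of `s`. -/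
def FFinite : Prop :=
  ∃ s : Finset R, ∀ x : R, ∃ c : R → R, x = ∑ y ∈ s, (c y) ^ p * y

/-- `R` is `F`-pure (equivalently, for `F`-finite rings, `F`-split): there is an additive
map `φ : F_*R → R` which is `R`-linear (i.e. `φ(r^p x) = r φ(x)`) and splits Frobenius. -/
def FPure : Prop :=
  ∃ φ : R →+ R, (∀ r x : R, φ (r ^ p * x) = r * φ x) ∧ φ 1 = 1

/-- The pair `(R, I^t)` is sharply `F`-split: for infinitely many `e > 0` the evaluation
map `I^{⌈t(p^e−1)⌉}·Hom(F^e_*R, R) → R` is surjective, i.e. the ideal generated by the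
values `φ(a)` for `a ∈ I^{⌈t(p^e−1)⌉}` and `φ ∈ Hom_R(F^e_*R, R)` is all of `R`. -/
def SharplyFSplit (I : Ideal R) (t : ℝ) : Prop :=
  ∃ᶠ e : ℕ in atTop, 0 < e ∧
    Ideal.span {y : R | ∃ (φ : R →+ R) (a : R),
      (∀ r x : R, φ (r ^ p ^ e * x) = r * φ x) ∧
      a ∈ I ^ ⌈t * ((p : ℝ) ^ e - 1)⌉₊ ∧ y = φ a} = ⊤

/-- The `F`-pure threshold: the supremum of all `t ≥ 0` such that `(R, I^t)` is
sharply `F`-split. -/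
def fpt (I : Ideal R) : ℝ :=
  sSup {t : ℝ | 0 ≤ t ∧ SharplyFSplit p I t}

/-! ### Auxiliary lemmas -/

/-- `p^e`-linearity of an additive map. -/
def Elin (e : ℕ) (φ : R →+ R) : Prop := ∀ r x : R, φ (r ^ p ^ e * x) = r * φ x

lemma elin_comp {e f : ℕ} {φ ψ : R →+ R} (hφ : Elin p e φ) (hψ : Elin p f ψ) :
    Elin p (e + f) (φ.comp ψ) := by
  intro r x
  have h : r ^ p ^ (e + f) = (r ^ p ^ e) ^ p ^ f := by rw [← pow_mul, ← pow_add]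
  rw [AddMonoidHom.comp_apply, h, hψ, hφ]; rfl

lemma exists_elin_one (hFP : FPure p (R := R)) (e : ℕ) :
    ∃ φ : R →+ R, Elin p e φ ∧ φ 1 = 1 := by
  induction e with
  | zero => exact ⟨AddMonoidHom.id R, fun r x => by simp, rfl⟩
  | succ e ih =>
      obtain ⟨ψ, hψ, hψ1⟩ := ih
      obtain ⟨φ, hφ, hφ1⟩ := hFP
      have hφ' : Elin p 1 φ := by intro r x; rw [pow_one]; exact hφ r x
      exact ⟨ψ.comp φ, elin_comp p hψ hφ', by simp [hφ1, hψ1]⟩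

lemma sharplyFSplit_zero (hFP : FPure p (R := R)) (I : Ideal R) : SharplyFSplit p I 0 := by
  unfold SharplyFSplit
  rw [Filter.frequently_atTop]
  intro a
  refine ⟨a + 1, by omega, by omega, ?_⟩
  obtain ⟨φ, hφ, hφ1⟩ := exists_elin_one p hFP (a + 1)
  rw [Ideal.eq_top_iff_one]
  refine Ideal.subset_span ⟨φ, 1, hφ, ?_, hφ1.symm⟩
  simp [Ideal.one_eq_top]

lemma sharplyFSplit_mono {I I' : Ideal R} (h : I ≤ I') {t : ℝ} (ht : SharplyFSplit p I t) :
    SharplyFSplit p I' t := by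
  refine Filter.Frequently.mono ht ?_
  rintro e ⟨he, hspan⟩
  refine ⟨he, top_unique ?_⟩
  rw [← hspan]
  apply Ideal.span_mono
  rintro y ⟨φ, a, h1, h2, h3⟩
  exact ⟨φ, a, h1, SetLike.le_def.mp (Ideal.pow_right_mono h _) h2, h3⟩

/-- binomial-type bound for powers of a sup of ideals -/
lemma sup_pow_le_aux (L X : Ideal R) (n : ℕ) {C : Ideal R}
    (h : ∀ k ≤ n, L ^ k * X ^ (n - k) ≤ C) : (L ⊔ X) ^ n ≤ C := by
  rw [← Ideal.add_eq_sup, add_pow, Ideal.sum_eq_sup]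
  apply Finset.sup_le
  intro k hk
  have hk' : k ≤ n := by simpa using Nat.lt_succ_iff.mp (Finset.mem_range.mp hk)
  exact le_trans Ideal.mul_le_left (h k hk')

lemma key_step (I L : Ideal R) {x : R} {m M' : ℕ} (hm : 0 < m)
    (hx : x ^ m ∈ I * ((L ⊔ Ideal.span {x}) ^ (m - 1)))
    (hIH : L ^ (M' + 1) ≤ I * L ^ M') :
    (L ⊔ Ideal.span {x}) ^ (M' + m) ≤ I * (L ⊔ Ideal.span {x}) ^ (M' + m - 1) := by
  set X : Ideal R := Ideal.span {x} with hX
  set K : Ideal R := L ⊔ X with hK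
  have hLK : L ≤ K := le_sup_left
  have hXK : X ≤ K := le_sup_right
  apply sup_pow_le_aux
  intro k hk
  by_cases hcase : k ≤ M'
  · have h2 : X ^ (M' + m - k) = X ^ m * X ^ (M' + m - k - m) := by
      rw [← pow_add]; congr 1; omega
    have hXm : X ^ m ≤ I * K ^ (m - 1) := by
      rw [hX, Ideal.span_singleton_pow, Ideal.span_le]
      simpa using hx
    calc L ^ k * X ^ (M' + m - k)
        = L ^ k * (X ^ m * X ^ (M' + m - k - m)) := by rw [h2]
      _ ≤ K ^ k * ((I * K ^ (m - 1)) * K ^ (M' + m - k - m)) :=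
          Ideal.mul_mono (Ideal.pow_right_mono hLK k)
            (Ideal.mul_mono hXm (Ideal.pow_right_mono hXK _))
      _ = I * (K ^ k * K ^ (m - 1) * K ^ (M' + m - k - m)) := by ring
      _ ≤ I * K ^ (M' + m - 1) := by
          apply Ideal.mul_mono_right
          rw [← pow_add, ← pow_add]
          apply Ideal.pow_le_pow_right
          omega
  · have h2 : L ^ k = L ^ (M' + 1) * L ^ (k - (M' + 1)) := by
      rw [← pow_add]; congr 1; omega
    calc L ^ k * X ^ (M' + m - k)
        = L ^ (M' + 1) * L ^ (k - (M' + 1)) * X ^ (M' + m - k) := by rw [h2]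
      _ ≤ (I * L ^ M') * L ^ (k - (M' + 1)) * X ^ (M' + m - k) :=
          Ideal.mul_mono (Ideal.mul_mono hIH le_rfl) le_rfl
      _ = I * (L ^ M' * L ^ (k - (M' + 1)) * X ^ (M' + m - k)) := by ring
      _ ≤ I * (K ^ M' * K ^ (k - (M' + 1)) * K ^ (M' + m - k)) := by
          apply Ideal.mul_mono_right
          exact Ideal.mul_mono (Ideal.mul_mono (Ideal.pow_right_mono hLK _)
            (Ideal.pow_right_mono hLK _)) (Ideal.pow_right_mono hXK _)
      _ ≤ I * K ^ (M' + m - 1) := by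
          apply Ideal.mul_mono_right
          rw [← pow_add, ← pow_add]
          apply Ideal.pow_le_pow_right
          omega

lemma key_core (I : Ideal R) :
    ∀ l : List R,
      (∀ x ∈ l, ∃ m, 0 < m ∧ x ^ m ∈ I * (I ⊔ Ideal.span {x}) ^ (m - 1)) →
      ∃ M, (I ⊔ Ideal.span {y | y ∈ l}) ^ (M + 1) ≤ I * (I ⊔ Ideal.span {y | y ∈ l}) ^ M := by
  intro l
  induction l with
  | nil =>
      intro _
      refine ⟨0, ?_⟩
      have : {y : R | y ∈ ([] : List R)} = (∅ : Set R) := by simp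
      simp [this, Ideal.span_empty]
  | cons x l ih =>
      intro h
      obtain ⟨M', hIH⟩ := ih (fun y hy => h y (List.mem_cons_of_mem x hy))
      obtain ⟨m, hm, hx⟩ := h x List.mem_cons_self
      set L : Ideal R := I ⊔ Ideal.span {y | y ∈ l} with hLdef
      have hKeq : I ⊔ Ideal.span {y | y ∈ x :: l} = L ⊔ Ideal.span {x} := by
        have : {y : R | y ∈ x :: l} = insert x {y | y ∈ l} := by
          ext y; simp [List.mem_cons]
        rw [this, Ideal.span_insert, hLdef]
        rw [sup_comm (Ideal.span {x}) (Ideal.span {y | y ∈ l}), ← sup_assoc]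
      rw [hKeq]
      have hx' : x ^ m ∈ I * (L ⊔ Ideal.span {x}) ^ (m - 1) := by
        refine SetLike.le_def.mp ?_ hx
        apply Ideal.mul_mono_right
        apply Ideal.pow_right_mono
        exact sup_le_sup_right le_sup_left _
      refine ⟨M' + (m - 1), ?_⟩
      have h1 : M' + (m - 1) + 1 = M' + m := by omega
      have h2 : M' + (m - 1) = M' + m - 1 := by omega
      rw [h1, h2]
      exact key_step I L hm hx' hIH

lemma key_iter (I K : Ideal R) {M : ℕ} (h : K ^ (M + 1) ≤ I * K ^ M) :
    ∀ n, K ^ (M + n) ≤ I ^ n := by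
  intro n
  induction n with
  | zero => simp [Ideal.one_eq_top]
  | succ n ihn =>
      calc K ^ (M + (n + 1)) = K ^ (M + 1) * K ^ n := by rw [← pow_add]; congr 1; omega
        _ ≤ (I * K ^ M) * K ^ n := Ideal.mul_mono h le_rfl
        _ = I * K ^ (M + n) := by rw [mul_assoc, ← pow_add]
        _ ≤ I * I ^ n := Ideal.mul_mono_right ihn
        _ = I ^ (n + 1) := by rw [← pow_succ']

lemma exists_span_finset {P : Ideal R} :
    ∀ {N : ℕ} {a : R}, a ∈ P ^ N → ∃ s : Finset R, ↑s ⊆ (P : Set R) ∧ a ∈ (Ideal.span ↑s) ^ N := by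
  classical
  intro N
  induction N with
  | zero => intro a _; exact ⟨∅, by simp, by simp [Ideal.one_eq_top]⟩
  | succ N ih =>
      intro a ha
      rw [pow_succ] at ha
      refine Submodule.mul_induction_on ha ?_ ?_
      · intro m hm r hr
        obtain ⟨s, hs, hms⟩ := ih hm
        refine ⟨insert r s, ?_, ?_⟩
        · rw [Finset.coe_insert]
          exact Set.insert_subset hr hs
        · rw [pow_succ]
          apply Ideal.mul_mem_mul
          · exact SetLike.le_def.mp (Ideal.pow_right_mono
              (Ideal.span_mono (by rw [Finset.coe_insert]; exact Set.subset_insert r s)) N) hms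
          · exact Ideal.subset_span (by simp)
      · rintro a b ⟨s1, hs1, ha1⟩ ⟨s2, hs2, hb2⟩
        refine ⟨s1 ∪ s2, ?_, ?_⟩
        · rw [Finset.coe_union]; exact Set.union_subset hs1 hs2
        · have m1 : Ideal.span (↑s1 : Set R) ≤ Ideal.span ↑(s1 ∪ s2) :=
            Ideal.span_mono (by rw [Finset.coe_union]; exact Set.subset_union_left)
          have m2 : Ideal.span (↑s2 : Set R) ≤ Ideal.span ↑(s1 ∪ s2) :=
            Ideal.span_mono (by rw [Finset.coe_union]; exact Set.subset_union_right)
          exact Ideal.add_mem _ (SetLike.le_def.mp (Ideal.pow_right_mono m1 _) ha1)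
            (SetLike.le_def.mp (Ideal.pow_right_mono m2 _) hb2)

lemma exists_span_finset_multi {P : Ideal R} {N : ℕ} (c : Finset R)
    (h : ∀ a ∈ c, a ∈ P ^ N) :
    ∃ s : Finset R, ↑s ⊆ (P : Set R) ∧ ∀ a ∈ c, a ∈ (Ideal.span ↑s) ^ N := by
  classical
  induction c using Finset.induction_on with
  | empty => exact ⟨∅, by simp, by simp⟩
  | insert a c hnotmem ih =>
      obtain ⟨s1, hs1, h1⟩ := ih (fun b hb => h b (Finset.mem_insert_of_mem hb))
      obtain ⟨s2, hs2, h2⟩ := exists_span_finset (h a (Finset.mem_insert_self a c))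
      refine ⟨s1 ∪ s2, by rw [Finset.coe_union]; exact Set.union_subset hs1 hs2, ?_⟩
      intro b hb
      have m1 : Ideal.span (↑s1 : Set R) ≤ Ideal.span ↑(s1 ∪ s2) :=
        Ideal.span_mono (by rw [Finset.coe_union]; exact Set.subset_union_left)
      have m2 : Ideal.span (↑s2 : Set R) ≤ Ideal.span ↑(s1 ∪ s2) :=
        Ideal.span_mono (by rw [Finset.coe_union]; exact Set.subset_union_right)
      rcases Finset.mem_insert.mp hb with rfl | hb
      · exact SetLike.le_def.mp (Ideal.pow_right_mono m2 _) h2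
      · exact SetLike.le_def.mp (Ideal.pow_right_mono m1 _) (h1 b hb)

/-- The set of values of `p^e`-linear maps on elements of `K^c`. -/
def Sset (e c : ℕ) (K : Ideal R) : Set R :=
  {y | ∃ (φ : R →+ R) (a : R), Elin p e φ ∧ a ∈ K ^ c ∧ y = φ a}

lemma comp_step (K : Ideal R) {e₁ c₁ e₂ c₂ : ℕ}
    (h₁ : (1 : R) ∈ Ideal.span (Sset p e₁ c₁ K))
    (h₂ : (1 : R) ∈ Ideal.span (Sset p e₂ c₂ K)) :
    (1 : R) ∈ Ideal.span (Sset p (e₂ + e₁) (c₁ * p ^ e₂ + c₂) K) := by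
  classical
  obtain ⟨f, hfs, hfsum⟩ := Submodule.mem_span_set.mp h₁
  obtain ⟨g, hgs, hgsum⟩ := Submodule.mem_span_set.mp h₂
  have hf : ∀ y : R, ∃ (φ : R →+ R) (a : R), y ∈ f.support →
      Elin p e₁ φ ∧ a ∈ K ^ c₁ ∧ y = φ a := by
    intro y
    by_cases hy : y ∈ f.support
    · obtain ⟨φ, a, h⟩ := hfs (Finset.mem_coe.mpr hy)
      exact ⟨φ, a, fun _ => h⟩
    · exact ⟨0, 0, fun h => absurd h hy⟩
  choose Φ A hΦ using hf
  have hg : ∀ z : R, ∃ (ψ : R →+ R) (b : R), z ∈ g.support →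
      Elin p e₂ ψ ∧ b ∈ K ^ c₂ ∧ z = ψ b := by
    intro z
    by_cases hz : z ∈ g.support
    · obtain ⟨ψ, b, h⟩ := hgs (Finset.mem_coe.mpr hz)
      exact ⟨ψ, b, fun _ => h⟩
    · exact ⟨0, 0, fun h => absurd h hz⟩
  choose Ψ B hΨ using hg
  have hone : (1 : R) = ∑ z ∈ g.support, g z * Ψ z (B z) := by
    rw [← hgsum, Finsupp.sum]
    refine Finset.sum_congr rfl fun z hz => ?_
    rw [smul_eq_mul]
    congr 1
    exact (hΨ z hz).2.2
  have key : ∀ y ∈ f.support, Φ y (A y) =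
      ∑ z ∈ g.support, Φ y (g z * Ψ z ((A y) ^ p ^ e₂ * B z)) := by
    intro y hy
    conv_lhs => rw [← mul_one (A y), hone, Finset.mul_sum, map_sum]
    refine Finset.sum_congr rfl fun z hz => ?_
    congr 1
    rw [(hΨ z hz).1 (A y) (B z)]
    ring
  have hmain : (1 : R) = ∑ y ∈ f.support, ∑ z ∈ g.support,
      f y * Φ y (g z * Ψ z ((A y) ^ p ^ e₂ * B z)) := by
    calc (1 : R) = ∑ y ∈ f.support, f y * Φ y (A y) := by
          rw [← hfsum, Finsupp.sum]
          refine Finset.sum_congr rfl fun y hy => ?_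
          rw [smul_eq_mul]
          congr 1
          exact (hΦ y hy).2.2
      _ = _ := by
          refine Finset.sum_congr rfl fun y hy => ?_
          rw [key y hy, Finset.mul_sum]
  rw [hmain]
  refine Ideal.sum_mem _ fun y hy => Ideal.sum_mem _ fun z hz => ?_
  refine Ideal.mul_mem_left _ _ (Ideal.subset_span ?_)
  refine ⟨(Φ y).comp ((AddMonoidHom.mulLeft (g z)).comp (Ψ z)),
    (A y) ^ p ^ e₂ * B z, ?_, ?_, ?_⟩
  · intro r x
    have hr : r ^ p ^ (e₂ + e₁) = (r ^ p ^ e₁) ^ p ^ e₂ := by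
      rw [← pow_mul, ← pow_add, Nat.add_comm e₁ e₂]
    simp only [AddMonoidHom.comp_apply, AddMonoidHom.coe_mulLeft]
    rw [hr, (hΨ z hz).1, mul_left_comm, (hΦ y hy).1]
  · have h1 : (A y) ^ p ^ e₂ ∈ K ^ (c₁ * p ^ e₂) := by
      rw [pow_mul]
      exact Ideal.pow_mem_pow (hΦ y hy).2.1 _
    have := Ideal.mul_mem_mul h1 (hΨ z hz).2.1
    rwa [← pow_add] at this
  · rfl

lemma comp_iter (K : Ideal R) {e c : ℕ} (h : (1 : R) ∈ Ideal.span (Sset p e c K)) :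
    ∀ n, 0 < n →
      (1 : R) ∈ Ideal.span (Sset p (n * e) (c * ∑ j ∈ Finset.range n, (p ^ e) ^ j) K) := by
  intro n
  induction n with
  | zero => omega
  | succ n ih =>
      intro _
      by_cases hn : n = 0
      · subst hn; simpa using h
      · have h1 := ih (Nat.pos_of_ne_zero hn)
        have h2 := comp_step p K h1 h
        have e1 : (n + 1) * e = e + n * e := by ring
        have e2 : c * ∑ j ∈ Finset.range (n + 1), (p ^ e) ^ j =
            (c * ∑ j ∈ Finset.range n, (p ^ e) ^ j) * p ^ e + c := by
          rw [geom_sum_succ]; ring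
        rw [e1, e2]
        exact h2

lemma intcl_pow_mem (I : Ideal R) {x : R} {m : ℕ} (hm : 0 < m) (a : ℕ → R)
    (ha : ∀ i ∈ Finset.Icc 1 m, a i ∈ I ^ i)
    (heq : x ^ m + ∑ i ∈ Finset.Icc 1 m, a i * x ^ (m - i) = 0) :
    x ^ m ∈ I * (I ⊔ Ideal.span {x}) ^ (m - 1) := by
  have hx : x ^ m = -∑ i ∈ Finset.Icc 1 m, a i * x ^ (m - i) :=
    eq_neg_of_add_eq_zero_left heq
  rw [hx]
  refine Submodule.neg_mem _ (Ideal.sum_mem _ fun i hi => ?_)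
  obtain ⟨hi1, hi2⟩ := Finset.mem_Icc.mp hi
  have hIi : I ^ i = I * I ^ (i - 1) := by
    conv_lhs => rw [show i = (i - 1) + 1 by omega]
    rw [pow_succ']
  have hai : a i ∈ I * I ^ (i - 1) := hIi ▸ ha i hi
  have hxi : x ^ (m - i) ∈ (Ideal.span {x}) ^ (m - i) :=
    Ideal.pow_mem_pow (Ideal.mem_span_singleton_self x) _
  have hmem := Ideal.mul_mem_mul hai hxi
  refine SetLike.le_def.mp ?_ hmem
  set K : Ideal R := I ⊔ Ideal.span {x} with hK
  calc I * I ^ (i - 1) * (Ideal.span {x}) ^ (m - i)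
      = I * (I ^ (i - 1) * (Ideal.span {x}) ^ (m - i)) := by rw [mul_assoc]
    _ ≤ I * (K ^ (i - 1) * K ^ (m - i)) :=
        Ideal.mul_mono_right (Ideal.mul_mono (Ideal.pow_right_mono le_sup_left _)
          (Ideal.pow_right_mono le_sup_right _))
    _ = I * K ^ (m - 1) := by rw [← pow_add]; congr 2; omega

lemma main_step (hp : p.Prime) {I J : Ideal R}
    (hcl : ∀ x ∈ J, ∃ m, 0 < m ∧ x ^ m ∈ I * (I ⊔ Ideal.span {x}) ^ (m - 1))
    {t t' : ℝ} (ht : SharplyFSplit p J t) (h0 : 0 ≤ t') (h1 : t' < t) :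
    SharplyFSplit p I t' := by
  classical
  obtain ⟨e₀, he₀, hspan⟩ := Filter.Frequently.exists ht
  set N : ℕ := ⌈t * ((p : ℝ) ^ e₀ - 1)⌉₊ with hN
  have hone : (1 : R) ∈ Ideal.span {y : R | ∃ (φ : R →+ R) (a : R),
      (∀ r x : R, φ (r ^ p ^ e₀ * x) = r * φ x) ∧ a ∈ J ^ N ∧ y = φ a} := by
    rw [hspan]; exact Submodule.mem_top
  obtain ⟨f, hfs, hfsum⟩ := Submodule.mem_span_set.mp hone
  have hf : ∀ y : R, ∃ (φ : R →+ R) (a : R), y ∈ f.support →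
      Elin p e₀ φ ∧ a ∈ J ^ N ∧ y = φ a := by
    intro y
    by_cases hy : y ∈ f.support
    · obtain ⟨φ, a, h⟩ := hfs (Finset.mem_coe.mpr hy)
      exact ⟨φ, a, fun _ => h⟩
    · exact ⟨0, 0, fun h => absurd h hy⟩
  choose Φ A hΦ using hf
  obtain ⟨s, hsJ, hsmem⟩ := exists_span_finset_multi (P := J) (N := N) (f.support.image A)
    (by
      intro b hb
      obtain ⟨y, hy, rfl⟩ := Finset.mem_image.mp hb
      exact (hΦ y hy).2.1)
  set K : Ideal R := I ⊔ Ideal.span ↑s with hK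
  obtain ⟨M, hM⟩ := key_core I s.toList
    (fun x hx => hcl x (hsJ (by simpa using hx)))
  have hset : {y : R | y ∈ s.toList} = (↑s : Set R) := by ext y; simp
  rw [hset] at hM
  have hKpow : ∀ n, K ^ (M + n) ≤ I ^ n := key_iter I K hM
  have h1K : (1 : R) ∈ Ideal.span (Sset p e₀ N K) := by
    refine Submodule.mem_span_set.mpr ⟨f, ?_, hfsum⟩
    intro y hy
    have hy' : y ∈ f.support := hy
    exact ⟨Φ y, A y, (hΦ y hy').1,
      SetLike.le_def.mp (Ideal.pow_right_mono le_sup_right N)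
        (hsmem (A y) (Finset.mem_image_of_mem A hy')), (hΦ y hy').2.2⟩
  have hcomp := comp_iter p K h1K
  -- arithmetic setup
  have hp1 : (1 : ℝ) < (p : ℝ) := by exact_mod_cast hp.one_lt
  have hx1 : (1 : ℝ) < (p : ℝ) ^ e₀ := one_lt_pow₀ hp1 (by omega)
  have ht0 : 0 ≤ t := le_of_lt (lt_of_le_of_lt h0 h1)
  have htt' : 0 < t - t' := by linarith
  obtain ⟨n₀, hn₀⟩ := Filter.eventually_atTop.mp
    ((tendsto_pow_atTop_atTop_of_one_lt hx1).eventually_ge_atTop ((M + 1) / (t - t') + 1))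
  have harith : ∀ n, n₀ ≤ n →
      M + ⌈t' * (((p : ℝ) ^ e₀) ^ n - 1)⌉₊ ≤ N * ∑ j ∈ Finset.range n, (p ^ e₀) ^ j := by
    intro n hn
    have hxn : (M + 1) / (t - t') + 1 ≤ ((p : ℝ) ^ e₀) ^ n := hn₀ n hn
    have hxn1 : (0 : ℝ) ≤ ((p : ℝ) ^ e₀) ^ n - 1 := by
      have := one_le_pow₀ hx1.le (n := n)
      linarith
    have hM1 : (M : ℝ) + 1 ≤ (((p : ℝ) ^ e₀) ^ n - 1) * (t - t') :=
      (div_le_iff₀ htt').mp (by linarith)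
    have hC : (⌈t' * (((p : ℝ) ^ e₀) ^ n - 1)⌉₊ : ℝ) < t' * (((p : ℝ) ^ e₀) ^ n - 1) + 1 :=
      Nat.ceil_lt_add_one (mul_nonneg h0 hxn1)
    have hgeom : ((∑ j ∈ Finset.range n, (p ^ e₀) ^ j : ℕ) : ℝ)
        = ∑ j ∈ Finset.range n, ((p : ℝ) ^ e₀) ^ j := by push_cast; ring
    have hsum0 : (0 : ℝ) ≤ ∑ j ∈ Finset.range n, ((p : ℝ) ^ e₀) ^ j :=
      Finset.sum_nonneg fun j _ => by positivity
    have hNle : t * ((p : ℝ) ^ e₀ - 1) ≤ (N : ℝ) := Nat.le_ceil _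
    have hNg : t * (((p : ℝ) ^ e₀) ^ n - 1)
        ≤ (N : ℝ) * ∑ j ∈ Finset.range n, ((p : ℝ) ^ e₀) ^ j := by
      have hgm : (∑ j ∈ Finset.range n, ((p : ℝ) ^ e₀) ^ j) * ((p : ℝ) ^ e₀ - 1)
          = ((p : ℝ) ^ e₀) ^ n - 1 := geom_sum_mul _ n
      calc t * (((p : ℝ) ^ e₀) ^ n - 1)
          = (t * ((p : ℝ) ^ e₀ - 1)) * ∑ j ∈ Finset.range n, ((p : ℝ) ^ e₀) ^ j := by
            rw [← hgm]; ring
        _ ≤ (N : ℝ) * ∑ j ∈ Finset.range n, ((p : ℝ) ^ e₀) ^ j :=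
            mul_le_mul_of_nonneg_right hNle hsum0
    rw [← Nat.cast_le (α := ℝ)]
    push_cast
    nlinarith [hC, hNg, hM1]
  -- conclude
  unfold SharplyFSplit
  rw [Filter.frequently_atTop]
  intro a
  set n : ℕ := max n₀ (max 1 a) with hn
  have hn1 : 1 ≤ n := le_max_of_le_right (le_max_left _ _)
  have hna : a ≤ n := le_max_of_le_right (le_max_right _ _)
  have hnn₀ : n₀ ≤ n := le_max_left _ _
  refine ⟨n * e₀, le_trans hna (Nat.le_mul_of_pos_right n he₀), by positivity, ?_⟩
  rw [Ideal.eq_top_iff_one]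
  have hmem := hcomp n hn1
  have hpp : ((p : ℝ) ^ (n * e₀)) = ((p : ℝ) ^ e₀) ^ n := by
    rw [← pow_mul, Nat.mul_comm]
  have hsub : Sset p (n * e₀) (N * ∑ j ∈ Finset.range n, (p ^ e₀) ^ j) K ⊆
      {y : R | ∃ (φ : R →+ R) (b : R),
        (∀ r x : R, φ (r ^ p ^ (n * e₀) * x) = r * φ x) ∧
        b ∈ I ^ ⌈t' * ((p : ℝ) ^ (n * e₀) - 1)⌉₊ ∧ y = φ b} := by
    rintro y ⟨φ, b, hφ, hb, rfl⟩
    refine ⟨φ, b, hφ, ?_, rfl⟩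
    have har := harith n hnn₀
    rw [hpp]
    have hbI : b ∈ I ^ (N * ∑ j ∈ Finset.range n, (p ^ e₀) ^ j - M) := by
      have hsplit : N * ∑ j ∈ Finset.range n, (p ^ e₀) ^ j
          = M + (N * ∑ j ∈ Finset.range n, (p ^ e₀) ^ j - M) := by omega
      exact SetLike.le_def.mp (hsplit ▸ hKpow _) (hsplit ▸ hb)
    exact SetLike.le_def.mp (Ideal.pow_le_pow_right (by omega)) hbI
  exact SetLike.le_def.mp (Ideal.span_mono hsub) hmem

/-- `fpt(I) = fpt(Ī)`, where `Ī` is the integral closure of `I`: the set of `x ∈ R`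
satisfying an equation `x^m + a_1 x^{m-1} + … + a_m = 0` with `a_i ∈ I^i`. -/
theorem stmt15 (hp : p.Prime) [CharP R p]
    (hFF : FFinite p (R := R)) (hFP : FPure p (R := R))
    (I : Ideal R) (hnzd : ∃ x ∈ I, x ∈ nonZeroDivisors R)
    (J : Ideal R)
    (hJ : ∀ x : R, x ∈ J ↔ ∃ m : ℕ, 0 < m ∧ ∃ a : ℕ → R,
      (∀ i ∈ Finset.Icc 1 m, a i ∈ I ^ i) ∧
      x ^ m + ∑ i ∈ Finset.Icc 1 m, a i * x ^ (m - i) = 0) :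
    fpt p I = fpt p J := by
  classical
  have hIJ : I ≤ J := by
    intro x hx
    rw [hJ]
    refine ⟨1, one_pos, fun _ => -x, ?_, ?_⟩
    · intro i hi
      rw [Finset.mem_Icc] at hi
      have : i = 1 := by omega
      subst this
      simpa [pow_one] using I.neg_mem hx
    · simp [Finset.Icc_self]
  have hcl : ∀ x ∈ J, ∃ m, 0 < m ∧ x ^ m ∈ I * (I ⊔ Ideal.span {x}) ^ (m - 1) := by
    intro x hx
    obtain ⟨m, hm, a, ha, heq⟩ := (hJ x).mp hx
    exact ⟨m, hm, intcl_pow_mem I hm a ha heq⟩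
  unfold fpt
  set A : Set ℝ := {t : ℝ | 0 ≤ t ∧ SharplyFSplit p I t} with hA
  set B : Set ℝ := {t : ℝ | 0 ≤ t ∧ SharplyFSplit p J t} with hB
  have h0A : (0 : ℝ) ∈ A := ⟨le_refl 0, sharplyFSplit_zero p hFP I⟩
  have hAB : A ⊆ B := fun u hu => ⟨hu.1, sharplyFSplit_mono p hIJ hu.2⟩
  have hBA : ∀ u ∈ B, ∀ v : ℝ, 0 ≤ v → v < u → v ∈ A :=
    fun u hu v hv0 hvu => ⟨hv0, main_step p hp hcl hu.2 hv0 hvu⟩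
  by_cases hbdd : BddAbove B
  · have hAbdd : BddAbove A := hbdd.mono hAB
    apply le_antisymm
    · exact csSup_le_csSup hbdd ⟨0, h0A⟩ hAB
    · apply csSup_le ⟨0, hAB h0A⟩
      intro u hu
      have hsA0 : (0 : ℝ) ≤ sSup A := le_csSup hAbdd h0A
      rcases lt_or_ge 0 u with hupos | huneg
      · by_contra hcon
        push_neg at hcon
        set v : ℝ := (sSup A + u) / 2 with hv
        have hv0 : 0 ≤ v := by rw [hv]; linarith
        have hvu : v < u := by rw [hv]; linarith
        have hvA : v ∈ A := hBA u hu v hv0 hvu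
        have : v ≤ sSup A := le_csSup hAbdd hvA
        rw [hv] at this
        linarith
      · exact huneg.trans hsA0
  · have hAunb : ¬ BddAbove A := by
      rintro ⟨b, hb⟩
      apply hbdd
      have hb0 : 0 ≤ b := hb h0A
      refine ⟨b + 1, fun u hu => ?_⟩
      by_contra hcon
      push_neg at hcon
      have hvA : b + 1 ∈ A := hBA u hu (b + 1) (by linarith) hcon
      have := hb hvA
      linarith
    rw [Real.sSup_of_not_bddAbove hbdd, Real.sSup_of_not_bddAbove hAunb]
end
end
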